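/- arXiv:1808.01351 — 3 statements merged into one kernel-verified Lean document; each statement's English description precedes it below -/
import Mathlib

section
/- If 𝒯 is non-discriminatory for binary sets, then every element of 𝒯 is an extreme point of the closed convex hull T of 𝒯; that is, 𝒯 = ∂T. -/
open MeasureTheory Set

section Defs

variable {Θ : Type*} [Fintype Θ]

/-- The value function `v_A(s) = max_{a ∈ A} ∑_θ a(θ) s(θ)`. -/
noncomputable def valueFn (A : Set (Θ → ℝ)) (s : Θ → ℝ) : ℝ :=
  sSup ((fun a => ∑ θ, a θ * s θ) '' A)

/-- A binary set: one or two elements. -/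
def Binary (A : Set (Θ → ℝ)) : Prop := A.ncard = 1 ∨ A.ncard = 2

/-- An information structure on `S`: a Borel probability measure supported on `S`. -/
def IsInfoStructure (S : Set (Θ → ℝ)) (π : Measure (Θ → ℝ)) : Prop :=
  IsProbabilityMeasure π ∧ π Sᶜ = 0

/-- The skill distribution `p_π(θ) = ∫_S s(θ) dπ(s)` induced by `π`. -/
noncomputable def skillDist (S : Set (Θ → ℝ)) (π : Measure (Θ → ℝ)) : Θ → ℝ :=
  fun θ => ∫ s in S, s θ ∂π

/-- `S` is non-discriminatory. -/
def NonDiscriminatory (S : Set (Θ → ℝ)) : Prop :=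
  ∀ π π' : Measure (Θ → ℝ), IsInfoStructure S π → IsInfoStructure S π' →
    ∀ A : Set (Θ → ℝ), A.Finite → A.Nonempty →
      skillDist S π = skillDist S π' →
      ∫ t in S, valueFn A t ∂π = ∫ t in S, valueFn A t ∂π'

/-- `S` is non-discriminatory for binary sets. -/
def NonDiscriminatoryBinary (S : Set (Θ → ℝ)) : Prop :=
  ∀ π π' : Measure (Θ → ℝ), IsInfoStructure S π → IsInfoStructure S π' →
    ∀ A : Set (Θ → ℝ), Binary A →
      skillDist S π = skillDist S π' →
      ∫ t in S, valueFn A t ∂π = ∫ t in S, valueFn A t ∂π'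

/-- `S` is identified. -/
def Identified (S : Set (Θ → ℝ)) : Prop :=
  ∀ π π' : Measure (Θ → ℝ), IsInfoStructure S π → IsInfoStructure S π' →
    skillDist S π = skillDist S π' → π = π'

/-- `S` admits fair valuations. -/
def FairValuations (S : Set (Θ → ℝ)) : Prop :=
  ∀ A : Set (Θ → ℝ), A.Finite → A.Nonempty →
    ∃ α : Θ → ℝ, ∀ t ∈ S, valueFn A t = ∑ θ, α θ * t θ

/-- `S` admits fair valuations for binary sets. -/
def FairValuationsBinary (S : Set (Θ → ℝ)) : Prop :=
  ∀ A : Set (Θ → ℝ), Binary A →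
    ∃ α : Θ → ℝ, ∀ t ∈ S, valueFn A t = ∑ θ, α θ * t θ

/-- `W_A(p)`: value of optimal information design with skill distribution `p`,
over information structures on `S`. -/
noncomputable def Wfn (A S : Set (Θ → ℝ)) (p : Θ → ℝ) : ℝ :=
  sSup {x | ∃ π : Measure (Θ → ℝ), IsInfoStructure S π ∧ skillDist S π = p ∧
    x = ∫ t in S, valueFn A t ∂π}

/-- A function is affine on `T`. -/
def AffineOnSet (W : (Θ → ℝ) → ℝ) (T : Set (Θ → ℝ)) : Prop :=
  ∀ p ∈ T, ∀ q ∈ T, ∀ γ : ℝ, 0 ≤ γ → γ ≤ 1 →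
    W (γ • p + (1 - γ) • q) = γ * W p + (1 - γ) * W q

end Defs

/-!
If a point `t ∈ 𝒯` were a convex combination `∑ wᵢ zᵢ` of other points of `𝒯`, the Dirac
information structure at `t` and the one drawing `zᵢ` with probability `wᵢ` would induce the same
skill distribution. For the binary set `{v, -v}` the value function is `|v ⬝ᵥ ·|`; since `t` and
the `zᵢ` lie in the simplex, `v` can be chosen orthogonal to `t` but not to some `zᵢ ≠ t`, so the
first structure has value `0` and the second a positive one. Hence no point of `𝒯` lies in the
convex hull of the others, i.e. every point of `𝒯` is extreme in `conv 𝒯`; and `conv 𝒯` is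
already closed, being the convex hull of a compact set in finite dimension.
-/
theorem isCompact_convexHull {E : Type*} [NormedAddCommGroup E] [NormedSpace ℝ E]
    [FiniteDimensional ℝ E] {K : Set E} (hK : IsCompact K) : IsCompact (convexHull ℝ K) := by
  let comb (k : ℕ) (p : (Fin k → ℝ) × (Fin k → E)) : E := ∑ i, p.1 i • p.2 i
  have hpieces : convexHull ℝ K =
      ⋃ k : Fin (Module.finrank ℝ E + 2),
        comb k '' (stdSimplex ℝ (Fin k) ×ˢ univ.pi fun _ => K) := by
    refine Subset.antisymm (fun x hx => ?_) (iUnion_subset fun k => ?_)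
    · obtain ⟨ι, _, z, w, hzK, hz, hw, hw1, rfl⟩ := eq_pos_convex_span_of_mem_convexHull hx
      have hcard : Fintype.card ι < Module.finrank ℝ E + 2 :=
        Nat.lt_succ_of_le (hz.card_le_finrank_succ.trans (by gcongr; exact Submodule.finrank_le _))
      let e := (Fintype.equivFin ι).symm
      refine mem_iUnion.2 ⟨⟨_, hcard⟩, (w ∘ e, z ∘ e),
        ⟨⟨fun i => (hw _).le, ?_⟩, fun i _ => hzK ⟨_, rfl⟩⟩, ?_⟩
      · simpa only [Function.comp_apply, e.sum_comp] using hw1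
      · exact e.sum_comp fun i => w i • z i
    · rintro _ ⟨⟨w, z⟩, ⟨hw, hz⟩, rfl⟩
      exact (convex_convexHull ℝ K).sum_mem (fun i _ => hw.1 i) hw.2
        fun i _ => subset_convexHull ℝ K (hz i trivial)
  rw [hpieces]
  exact isCompact_iUnion fun k => ((isCompact_stdSimplex ℝ _).prod
    (isCompact_univ_pi fun _ => hK)).image (by fun_prop)

theorem mem_extremePoints_convexHull_of_notMem_convexHull_sdiff {𝕜 E : Type*} [Field 𝕜]
    [LinearOrder 𝕜] [IsStrictOrderedRing 𝕜] [AddCommGroup E] [Module 𝕜 E] {s : Set E} {x : E}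
    (hxs : x ∈ s) (hx : x ∉ convexHull 𝕜 (s \ {x})) : x ∈ (convexHull 𝕜 s).extremePoints 𝕜 := by
  rcases (s \ {x}).eq_empty_or_nonempty with hempty | hne
  · rw [sdiff_eq_empty, subset_singleton_iff_eq] at hempty
    rcases hempty with rfl | rfl
    · exact absurd hxs (notMem_empty x)
    · simp
  have hjoin : convexHull 𝕜 s = convexJoin 𝕜 {x} (convexHull 𝕜 (s \ {x})) := by
    rw [← convexHull_insert hne, insert_sdiff_singleton, insert_eq_of_mem hxs]
  refine mem_extremePoints_iff_left.2 ⟨subset_convexHull 𝕜 s hxs, fun y hy z hz hxyz => ?_⟩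
  simp only [hjoin, mem_convexJoin, mem_singleton_iff, exists_eq_left] at hy hz
  obtain ⟨u, hu, a₁, b₁, -, hb₁, hab₁, rfl⟩ := hy
  obtain ⟨u', hu', a₂, b₂, -, hb₂, hab₂, rfl⟩ := hz
  obtain ⟨α, β, hα, hβ, hαβ, hxαβ⟩ := hxyz
  rcases hb₁.eq_or_lt with rfl | hb₁
  · rw [zero_smul, add_zero, (by linarith : a₁ = 1), one_smul]
  set c := α * b₁ + β * b₂
  have hc : 0 < c := by positivity
  have hcx : c • x = (α * b₁) • u + (β * b₂) • u' := by
    obtain rfl : a₁ = 1 - b₁ := by linarith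
    obtain rfl : a₂ = 1 - b₂ := by linarith
    obtain rfl : α = 1 - β := by linarith
    linear_combination (norm := module) -hxαβ
  refine absurd ?_ hx
  convert convex_convexHull 𝕜 (s \ {x}) hu hu' (a := α * b₁ / c) (b := β * b₂ / c)
    (by positivity) (by positivity) (by rw [← add_div, div_self hc.ne']) using 1
  rw [div_eq_inv_mul, div_eq_inv_mul, mul_smul c⁻¹ (α * b₁), mul_smul c⁻¹ (β * b₂), ← smul_add,
    ← hcx, inv_smul_smul₀ hc.ne']

section DiracCombination

variable {α ι : Type*} [MeasurableSpace α] [Fintype ι] {S : Set α} {w : ι → ℝ} {z : ι → α}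

lemma isProbabilityMeasure_sum_dirac (hw : ∀ i, 0 ≤ w i) (hw1 : ∑ i, w i = 1) :
    IsProbabilityMeasure (∑ i, ENNReal.ofReal (w i) • Measure.dirac (z i)) := by
  constructor
  simp [← ENNReal.ofReal_sum_of_nonneg fun i _ => hw i, hw1]

variable [MeasurableSingletonClass α]

lemma setIntegral_dirac_of_mem {a : α} (ha : a ∈ S) (f : α → ℝ) :
    ∫ x in S, f x ∂Measure.dirac a = f a := by
  classical
  rw [setIntegral_dirac, if_pos ha]

lemma measure_compl_sum_dirac_eq_zero (hz : ∀ i, z i ∈ S) :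
    (∑ i, ENNReal.ofReal (w i) • Measure.dirac (z i)) Sᶜ = 0 := by
  simp [Measure.dirac_apply, hz]

lemma setIntegral_sum_dirac (hw : ∀ i, 0 ≤ w i) (hz : ∀ i, z i ∈ S) (f : α → ℝ) :
    ∫ x in S, f x ∂(∑ i, ENNReal.ofReal (w i) • Measure.dirac (z i)) = ∑ i, w i * f (z i) := by
  rw [Measure.restrict_eq_self_of_ae_mem (measure_compl_sum_dirac_eq_zero hz),
    integral_finsetSum_measure fun i _ =>
      (integrable_dirac enorm_lt_top).smul_measure ENNReal.ofReal_ne_top]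
  simp only [integral_smul_measure, integral_dirac, ENNReal.toReal_ofReal (hw _), smul_eq_mul]

end DiracCombination

lemma binary_pair {Θ : Type*} (a b : Θ → ℝ) : Binary {a, b} := by
  rcases eq_or_ne a b with rfl | h
  · simp [Binary]
  · exact Or.inr (ncard_pair h)

section InfoStructure

variable {Θ ι : Type*} [Fintype Θ] [Fintype ι] {S : Set (Θ → ℝ)} {t : Θ → ℝ}
  {w : ι → ℝ} {z : ι → Θ → ℝ}

lemma isInfoStructure_dirac (ht : t ∈ S) : IsInfoStructure S (Measure.dirac t) :=
  ⟨inferInstance, by simp [Measure.dirac_apply, ht]⟩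

lemma skillDist_dirac (ht : t ∈ S) : skillDist S (Measure.dirac t) = t := by
  ext θ
  exact setIntegral_dirac_of_mem ht _

lemma isInfoStructure_sum_dirac (hw : ∀ i, 0 ≤ w i) (hw1 : ∑ i, w i = 1) (hz : ∀ i, z i ∈ S) :
    IsInfoStructure S (∑ i, ENNReal.ofReal (w i) • Measure.dirac (z i)) :=
  ⟨isProbabilityMeasure_sum_dirac hw hw1, measure_compl_sum_dirac_eq_zero hz⟩

lemma skillDist_sum_dirac (hw : ∀ i, 0 ≤ w i) (hz : ∀ i, z i ∈ S) :
    skillDist S (∑ i, ENNReal.ofReal (w i) • Measure.dirac (z i)) = ∑ i, w i • z i := by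
  ext θ
  simp [skillDist, setIntegral_sum_dirac hw hz]

lemma valueFn_pair_neg (v s : Θ → ℝ) : valueFn {v, -v} s = |v ⬝ᵥ s| := by
  rw [valueFn, image_pair, csSup_pair, abs_eq_max_neg, ← neg_dotProduct]
  rfl

lemma exists_dotProduct_eq_zero_pos {z : Θ → ℝ} (ht : ∑ θ, t θ = 1) (hz : ∑ θ, z θ = 1)
    (hzt : z ≠ t) : ∃ v : Θ → ℝ, v ⬝ᵥ t = 0 ∧ 0 < v ⬝ᵥ z := by
  refine ⟨(z - t) - ((z - t) ⬝ᵥ t) • 1, ?_, ?_⟩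
  · simp [sub_dotProduct, smul_dotProduct, one_dotProduct, ht]
  · have hpos : 0 < (z - t) ⬝ᵥ (z - t) :=
      (Fintype.sum_nonneg fun θ => mul_self_nonneg _).lt_of_ne'
        (dotProduct_self_eq_zero.not.2 (sub_ne_zero.2 hzt))
    simpa [sub_dotProduct, dotProduct_sub, smul_dotProduct, one_dotProduct, hz] using hpos

theorem NonDiscriminatoryBinary.notMem_convexHull_sdiff (hnd : NonDiscriminatoryBinary S)
    (hS : S ⊆ stdSimplex ℝ Θ) (ht : t ∈ S) : t ∉ convexHull ℝ (S \ {t}) := by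
  intro hconv
  obtain ⟨κ, _, z, w, hzS, -, hw, hw1, hwz⟩ := eq_pos_convex_span_of_mem_convexHull hconv
  obtain ⟨i⟩ : Nonempty κ := by
    by_contra hκ
    simp [not_nonempty_iff.1 hκ] at hw1
  have hzi : z i ∈ S \ {t} := hzS ⟨i, rfl⟩
  obtain ⟨v, hvt, hvz⟩ := exists_dotProduct_eq_zero_pos (hS ht).2 (hS hzi.1).2 hzi.2
  have hw₀ : ∀ j, 0 ≤ w j := fun j => (hw j).le
  have hz : ∀ j, z j ∈ S := fun j => (hzS ⟨j, rfl⟩).1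
  have hsame := hnd _ _ (isInfoStructure_dirac ht) (isInfoStructure_sum_dirac hw₀ hw1 hz)
    {v, -v} (binary_pair v (-v)) (by rw [skillDist_dirac ht, skillDist_sum_dirac hw₀ hz, hwz])
  simp only [setIntegral_dirac_of_mem ht, setIntegral_sum_dirac hw₀ hz, valueFn_pair_neg, hvt,
    abs_zero] at hsame
  have hpos : 0 < ∑ j, w j * |v ⬝ᵥ z j| :=
    Finset.sum_pos' (fun j _ => mul_nonneg (hw₀ j) (abs_nonneg _))
      ⟨i, Finset.mem_univ i, mul_pos (hw i) (abs_pos.2 hvz.ne')⟩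
  exact hpos.ne hsame

end InfoStructure

variable {Θ : Type*} [Fintype Θ] [Nonempty Θ]

theorem stmt3 (𝒯 : Set (Θ → ℝ)) (h𝒯 : 𝒯 ⊆ stdSimplex ℝ Θ) (h𝒯c : IsClosed 𝒯)
    (hnd : NonDiscriminatoryBinary 𝒯) :
    𝒯 = Set.extremePoints ℝ (closure (convexHull ℝ 𝒯)) := by
  have hcompact : IsCompact (convexHull ℝ 𝒯) := isCompact_convexHull
    ((isCompact_stdSimplex ℝ Θ).of_isClosed_subset h𝒯c h𝒯)
  rw [hcompact.isClosed.closure_eq]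
  exact Subset.antisymm (fun t ht => mem_extremePoints_convexHull_of_notMem_convexHull_sdiff ht
    (hnd.notMem_convexHull_sdiff h𝒯 ht)) extremePoints_convexHull_subset
end

section
/- If 𝒯 is identified, then 𝒯 admits fair valuations: for every finite nonempty A ⊆ ℝ^Θ there exists α_A ∈ ℝ^Θ with v_A(t) = ∑_θ α_A(θ)t(θ) for all t ∈ 𝒯. -/
open MeasureTheory Set

variable {Θ : Type*} [Fintype Θ] [Nonempty Θ]

/-!
If finitely many points of `𝒯` were linearly dependent, the positive and negative parts of a
vanishing combination would, after normalisation, be two different finitely supported information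
structures with the same skill distribution: the two parts have equal mass because the coordinates
of a point of the simplex sum to one. So `𝒯` is linearly independent, and every function on a
linearly independent set, `v_A` in particular, is the restriction of a linear functional.
-/

section WeightedDirac

variable {X : Type*} [MeasurableSpace X]

noncomputable def weightedDirac (F : Finset X) (w : X → ℝ) : Measure X :=
  ∑ t ∈ F, ENNReal.ofReal (w t) • Measure.dirac t

variable [MeasurableSingletonClass X] {F : Finset X} {w : X → ℝ}

theorem weightedDirac_apply (F : Finset X) (w : X → ℝ) (s : Set X) :
    weightedDirac F w s = ∑ t ∈ F, ENNReal.ofReal (w t) * s.indicator 1 t := by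
  simp [weightedDirac, Measure.dirac_apply]

theorem weightedDirac_singleton {t : X} (ht : t ∈ F) :
    weightedDirac F w {t} = ENNReal.ofReal (w t) := by
  rw [weightedDirac_apply, Finset.sum_eq_single_of_mem t ht] <;> simp_all

theorem weightedDirac_compl_eq_zero {S : Set X} (hF : ↑F ⊆ S) : weightedDirac F w Sᶜ = 0 := by
  rw [weightedDirac_apply]
  exact Finset.sum_eq_zero fun t ht => by simp [hF ht]

theorem isProbabilityMeasure_weightedDirac (hw : ∀ t ∈ F, 0 ≤ w t) (hsum : ∑ t ∈ F, w t = 1) :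
    IsProbabilityMeasure (weightedDirac F w) := by
  constructor
  simp [weightedDirac_apply, ← ENNReal.ofReal_sum_of_nonneg hw, hsum]

theorem integral_weightedDirac {E : Type*} [NormedAddCommGroup E] [NormedSpace ℝ E]
    [CompleteSpace E] (hw : ∀ t ∈ F, 0 ≤ w t) (f : X → E) :
    ∫ x, f x ∂(weightedDirac F w) = ∑ t ∈ F, w t • f t := by
  rw [weightedDirac, integral_finsetSum_measure fun t _ =>
    ((integrable_const (f t)).congr (ae_eq_dirac f).symm).smul_measure ENNReal.ofReal_ne_top]
  refine Finset.sum_congr rfl fun t ht => ?_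
  rw [integral_smul_measure, integral_dirac, ENNReal.toReal_ofReal (hw t ht)]

end WeightedDirac

section Identified

variable {ι : Type*} [Fintype ι] {S : Set (ι → ℝ)} {F : Finset (ι → ℝ)} {w : (ι → ℝ) → ℝ}

theorem isInfoStructure_weightedDirac (hF : ↑F ⊆ S) (hw : ∀ t ∈ F, 0 ≤ w t)
    (hsum : ∑ t ∈ F, w t = 1) : IsInfoStructure S (weightedDirac F w) :=
  ⟨isProbabilityMeasure_weightedDirac hw hsum, weightedDirac_compl_eq_zero hF⟩

theorem skillDist_weightedDirac (hF : ↑F ⊆ S) (hw : ∀ t ∈ F, 0 ≤ w t) :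
    skillDist S (weightedDirac F w) = ∑ t ∈ F, w t • t := by
  ext θ
  rw [skillDist, Measure.restrict_eq_self_of_ae_mem (ae_iff.mpr (weightedDirac_compl_eq_zero hF)),
    integral_weightedDirac hw]
  simp

theorem sum_apply_sum_smul_of_subset_stdSimplex (hF : ↑F ⊆ stdSimplex ℝ ι) :
    ∑ θ, (∑ t ∈ F, w t • t) θ = ∑ t ∈ F, w t := by
  simp only [Finset.sum_apply, Pi.smul_apply, smul_eq_mul]
  rw [Finset.sum_comm]
  exact Finset.sum_congr rfl fun t ht => by rw [← Finset.mul_sum, (hF ht).2, mul_one]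

theorem Identified.eq_of_sum_smul_eq_of_sum_eq_one (hid : Identified S) (hF : ↑F ⊆ S)
    {w' : (ι → ℝ) → ℝ} (hw : ∀ t ∈ F, 0 ≤ w t) (hw' : ∀ t ∈ F, 0 ≤ w' t)
    (hsum : ∑ t ∈ F, w t = 1) (hsum' : ∑ t ∈ F, w' t = 1)
    (h : ∑ t ∈ F, w t • t = ∑ t ∈ F, w' t • t) : ∀ t ∈ F, w t = w' t := by
  have hμ := hid _ _ (isInfoStructure_weightedDirac hF hw hsum)
    (isInfoStructure_weightedDirac hF hw' hsum')
    (by rw [skillDist_weightedDirac hF hw, skillDist_weightedDirac hF hw', h])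
  intro t ht
  have hμt := congrArg (· {t}) hμ
  simp only [weightedDirac_singleton ht] at hμt
  exact (ENNReal.ofReal_eq_ofReal_iff (hw t ht) (hw' t ht)).mp hμt

theorem Identified.eq_of_sum_smul_eq (hid : Identified S) (hS : S ⊆ stdSimplex ℝ ι)
    (hF : ↑F ⊆ S) {w' : (ι → ℝ) → ℝ} (hw : ∀ t ∈ F, 0 ≤ w t) (hw' : ∀ t ∈ F, 0 ≤ w' t)
    (h : ∑ t ∈ F, w t • t = ∑ t ∈ F, w' t • t) : ∀ t ∈ F, w t = w' t := by
  have hmass : ∑ t ∈ F, w t = ∑ t ∈ F, w' t := by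
    rw [← sum_apply_sum_smul_of_subset_stdSimplex (hF.trans hS), h,
      sum_apply_sum_smul_of_subset_stdSimplex (hF.trans hS)]
  set C := ∑ t ∈ F, w t
  rcases (Finset.sum_nonneg hw).eq_or_lt with hC | hC
  · intro t ht
    rw [(Finset.sum_eq_zero_iff_of_nonneg hw).mp hC.symm t ht,
      (Finset.sum_eq_zero_iff_of_nonneg hw').mp (hC.trans hmass).symm t ht]
  have hnormalized := hid.eq_of_sum_smul_eq_of_sum_eq_one hF (w := (w · / C)) (w' := (w' · / C))
    (fun t ht => div_nonneg (hw t ht) hC.le) (fun t ht => div_nonneg (hw' t ht) hC.le)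
    (by rw [← Finset.sum_div, div_self hC.ne']) (by rw [← Finset.sum_div, ← hmass, div_self hC.ne'])
    (by simp_rw [div_eq_inv_mul, mul_smul, ← Finset.smul_sum, h])
  exact fun t ht => (div_left_inj' hC.ne').mp (hnormalized t ht)

theorem Identified.linearIndepOn (hid : Identified S) (hS : S ⊆ stdSimplex ℝ ι) :
    LinearIndepOn ℝ id S := by
  classical
  refine linearIndepOn_iff.mpr fun l hl hl0 => ?_
  have hsplit : ∑ t ∈ l.support, (l t)⁺ • t = ∑ t ∈ l.support, (l t)⁻ • t := by
    rw [← sub_eq_zero, ← Finset.sum_sub_distrib]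
    simpa [← sub_smul, Finsupp.linearCombination_apply, Finsupp.sum] using hl0
  ext t
  by_cases ht : t ∈ l.support
  · rw [Finsupp.coe_zero, Pi.zero_apply, ← posPart_sub_negPart (l t), sub_eq_zero]
    exact hid.eq_of_sum_smul_eq hS hl (fun t _ => posPart_nonneg (l t))
      (fun t _ => negPart_nonneg (l t)) hsplit t ht
  · exact Finsupp.notMem_support_iff.mp ht

end Identified

theorem LinearIndepOn.exists_forall_eq_sum_mul {K ι : Type*} [Field K] [Fintype ι]
    {S : Set (ι → K)} (hS : LinearIndepOn K id S) (f : (ι → K) → K) :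
    ∃ α : ι → K, ∀ t ∈ S, f t = ∑ i, α i * t i := by
  classical
  let G := (Module.Basis.extend hS).constr K (fun x => f x)
  refine ⟨fun i => G fun j => if i = j then 1 else 0, fun t ht => ?_⟩
  have hGt : G t = f t := by
    simpa [G] using
      (Module.Basis.extend hS).constr_basis K (fun x => f x) ⟨t, Module.Basis.subset_extend hS ht⟩
  rw [← hGt, G.pi_apply_eq_sum_univ t]
  simp only [smul_eq_mul, mul_comm]

theorem stmt5_general (𝒯 : Set (Θ → ℝ)) (h𝒯 : 𝒯 ⊆ stdSimplex ℝ Θ)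
    (hid : Identified 𝒯) : FairValuations 𝒯 :=
  fun A _ _ => (hid.linearIndepOn h𝒯).exists_forall_eq_sum_mul (valueFn A)

theorem stmt5 (𝒯 : Set (Θ → ℝ)) (h𝒯 : 𝒯 ⊆ stdSimplex ℝ Θ) (h𝒯c : IsClosed 𝒯)
    (hid : Identified 𝒯) : FairValuations 𝒯 :=
  stmt5_general 𝒯 h𝒯 hid
end

section
/- For every finite nonempty A ⊆ ℝ^Θ and every p ∈ T, W_A(p) = Y_A(p), where Y_A is the concave envelope of v_A on T, i.e., Y_A(p) = inf{ l(p) : l an affine function on ℝ^Θ with v_A(t) ≤ l(t) for all t ∈ T }. -/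
open MeasureTheory Set

/-!
Integrating an affine majorant of `v` against an information structure with barycenter `p` gives
its value at `p`, so `W ≤ Y`. Conversely, finitely supported information structures realise every
point of the convex hull of the graph of `v` over the compact set `T`; this hull is compact, so the
point `(p, W(p) + ε)` lies outside it and a separating hyperplane, necessarily non-vertical, is an
affine majorant of `v` whose value at `p` is below `W(p) + ε`.
-/

section ConvexHull

variable {E : Type*} [NormedAddCommGroup E] [NormedSpace ℝ E] [FiniteDimensional ℝ E]

-- Carathéodory: `finrank ℝ E + 1` points suffice.
theorem convexHull_eq_biUnion_image_stdSimplex (s : Set E) :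
    convexHull ℝ s = ⋃ n ∈ Finset.range (Module.finrank ℝ E + 2),
      (fun wz : (Fin n → ℝ) × (Fin n → E) => ∑ i, wz.1 i • wz.2 i) ''
        (stdSimplex ℝ (Fin n) ×ˢ univ.pi fun _ => s) := by
  apply Subset.antisymm
  · intro x hx
    obtain ⟨ι, _, z, w, hzs, hz, hw₀, hw₁, rfl⟩ := eq_pos_convex_span_of_mem_convexHull hx
    have hcard : Fintype.card ι < Module.finrank ℝ E + 2 :=
      Nat.lt_succ_of_le (hz.card_le_finrank_succ.trans
        (Nat.succ_le_succ (Submodule.finrank_le _)))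
    let e := Fintype.equivFin ι
    refine mem_biUnion (Finset.mem_range.2 hcard) ⟨(w ∘ e.symm, z ∘ e.symm), ⟨⟨?_, ?_⟩, ?_⟩, ?_⟩
    · exact fun i => (hw₀ _).le
    · simpa [e.symm.sum_comp] using hw₁
    · exact fun i _ => hzs (mem_range_self _)
    · exact e.symm.sum_comp fun i => w i • z i
  · simp only [iUnion_subset_iff]
    rintro n - _ ⟨⟨w, z⟩, ⟨hw, hz⟩, rfl⟩
    exact mem_convexHull_of_exists_fintype w z hw.1 hw.2 (fun i => hz i (mem_univ i)) rfl

theorem IsCompact.convexHull {s : Set E} (hs : IsCompact s) : IsCompact (convexHull ℝ s) := by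
  rw [convexHull_eq_biUnion_image_stdSimplex]
  refine (Finset.range _).isCompact_biUnion fun n _ =>
    ((isCompact_stdSimplex ℝ _).prod (isCompact_univ_pi fun _ => hs)).image ?_
  fun_prop

theorem exists_affine_majorant_lt {S : Set E} (hS : IsCompact S) {v : E → ℝ}
    (hv : ContinuousOn v S) {p : E} (hp : p ∈ S) {r : ℝ} (hvp : v p < r)
    (hr : (p, r) ∉ convexHull ℝ ((fun t => (t, v t)) '' S)) :
    ∃ (g : StrongDual ℝ E) (c : ℝ), (∀ t ∈ S, v t ≤ c + g t) ∧ c + g p < r := by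
  have hK : IsClosed (convexHull ℝ ((fun t => (t, v t)) '' S)) :=
    (hS.image_of_continuousOn (continuousOn_id.prodMk hv)).convexHull.isClosed
  obtain ⟨f, u, hfK, hfr⟩ := geometric_hahn_banach_closed_point (convex_convexHull ℝ _) hK hr
  set g : StrongDual ℝ E := f.comp (ContinuousLinearMap.inl ℝ E ℝ)
  set β := f (0, 1)
  have hf : ∀ t s, f (t, s) = g t + s * β := fun t s => by
    rw [← smul_eq_mul, ← map_smul, ContinuousLinearMap.comp_apply, ← map_add]
    simp
  have hgraph : ∀ t ∈ S, g t + v t * β < u := fun t ht =>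
    hf t (v t) ▸ hfK _ (subset_convexHull ℝ _ ⟨t, ht, rfl⟩)
  rw [hf] at hfr
  -- the separating hyperplane is not vertical since `(p, v p)` and `(p, r)` lie on opposite sides
  have hβ : 0 < β := by
    have := hgraph p hp
    nlinarith
  have hval : ∀ t, u / β + (-β⁻¹ • g) t = (u - g t) / β := fun t => by
    simp only [smul_apply, smul_eq_mul]
    field_simp
    ring
  refine ⟨-β⁻¹ • g, u / β, fun t ht => ?_, ?_⟩
  · rw [hval, le_div_iff₀ hβ]
    linarith [hgraph t ht]
  · rw [hval, div_lt_iff₀ hβ]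
    linarith

end ConvexHull

theorem continuous_valueFn {Θ : Type*} [Fintype Θ] {A : Set (Θ → ℝ)} (hA : A.Finite)
    (hA' : A.Nonempty) : Continuous (valueFn A) := by
  have : valueFn A = fun s => hA.toFinset.sup' (by simpa using hA') fun a => ∑ θ, a θ * s θ := by
    ext s
    rw [Finset.sup'_eq_csSup_image, Set.Finite.coe_toFinset, valueFn]
  rw [this]
  exact Continuous.finset_sup'_apply _ fun a _ => by fun_prop

theorem IsInfoStructure.restrict_eq {Θ : Type*} {S : Set (Θ → ℝ)} {π : Measure (Θ → ℝ)}
    (hπ : IsInfoStructure S π) : π.restrict S = π :=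
  Measure.restrict_eq_self_of_ae_mem hπ.2

namespace IsInfoStructure

variable {Θ : Type*} [Fintype Θ] {S : Set (Θ → ℝ)} {π : Measure (Θ → ℝ)}

theorem setIntegral_affine (hπ : IsInfoStructure S π) (hS : IsCompact S) (c : ℝ) (y : Θ → ℝ) :
    ∫ t in S, (c + ∑ θ, y θ * t θ) ∂π = c + ∑ θ, y θ * skillDist S π θ := by
  have := hπ.1
  have hint : ∀ θ, IntegrableOn (fun t : Θ → ℝ => y θ * t θ) S π := fun θ =>
    ContinuousOn.integrableOn_compact hS (by fun_prop)
  rw [integral_add (integrable_const c) (integrable_finsetSum _ fun θ _ => hint θ),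
    integral_finsetSum _ fun θ _ => hint θ, hπ.restrict_eq, integral_const, probReal_univ,
    one_smul]
  simp only [skillDist, integral_const_mul, hπ.restrict_eq]

theorem setIntegral_le_affine (hπ : IsInfoStructure S π) (hS : IsCompact S) {v : (Θ → ℝ) → ℝ}
    (hv : ContinuousOn v S) {c : ℝ} {y : Θ → ℝ} (hvy : ∀ t ∈ S, v t ≤ c + ∑ θ, y θ * t θ) :
    ∫ t in S, v t ∂π ≤ c + ∑ θ, y θ * skillDist S π θ := by
  have := hπ.1
  rw [← hπ.setIntegral_affine hS]
  exact setIntegral_mono_on (hv.integrableOn_compact hS)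
    (ContinuousOn.integrableOn_compact hS (by fun_prop)) hS.isClosed.measurableSet hvy

end IsInfoStructure

theorem exists_isInfoStructure_sum_dirac {Θ ι : Type*} [Fintype Θ] [Fintype ι] {S : Set (Θ → ℝ)}
    {w : ι → ℝ} (hw₀ : ∀ i, 0 ≤ w i) (hw₁ : ∑ i, w i = 1) {t : ι → Θ → ℝ} (ht : ∀ i, t i ∈ S) :
    ∃ π, IsInfoStructure S π ∧ ∀ f : (Θ → ℝ) → ℝ, ∫ s in S, f s ∂π = ∑ i, w i * f (t i) := by
  set π : Measure (Θ → ℝ) := ∑ i, ENNReal.ofReal (w i) • Measure.dirac (t i)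
  have hπ : IsInfoStructure S π := by
    refine ⟨⟨?_⟩, ?_⟩
    · simp [π, ← ENNReal.ofReal_sum_of_nonneg fun i _ => hw₀ i, hw₁]
    · simp [π, Measure.dirac_apply, ht]
  refine ⟨π, hπ, fun f => ?_⟩
  rw [hπ.restrict_eq, integral_finsetSum_measure fun i _ =>
    (integrable_dirac enorm_lt_top).smul_measure ENNReal.ofReal_ne_top]
  simp [integral_smul_measure, ENNReal.toReal_ofReal (hw₀ _)]

section Duality

variable {Θ : Type*} [Fintype Θ] {S : Set (Θ → ℝ)} {v : (Θ → ℝ) → ℝ}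

theorem exists_isInfoStructure_of_mem_convexHull_graph {p : Θ → ℝ} {r : ℝ}
    (h : (p, r) ∈ convexHull ℝ ((fun t => (t, v t)) '' S)) :
    ∃ π, IsInfoStructure S π ∧ skillDist S π = p ∧ r = ∫ t in S, v t ∂π := by
  obtain ⟨ι, _, w, z, hw₀, hw₁, hz, hsum⟩ := mem_convexHull_iff_exists_fintype.1 h
  choose t ht hzt using hz
  obtain ⟨π, hπ, hint⟩ := exists_isInfoStructure_sum_dirac hw₀ hw₁ ht
  refine ⟨π, hπ, funext fun θ => ?_, ?_⟩
  · simpa [skillDist, hint, ← hzt, Prod.fst_sum, Finset.sum_apply] using congr($(hsum).1 θ)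
  · simpa [hint, ← hzt, Prod.snd_sum] using congr($(hsum).2).symm

theorem sSup_setIntegral_eq_sInf_affine_majorant (hS : IsCompact S) (hv : ContinuousOn v S)
    {p : Θ → ℝ} (hp : p ∈ S) :
    sSup {x | ∃ π, IsInfoStructure S π ∧ skillDist S π = p ∧ x = ∫ t in S, v t ∂π} =
      sInf {x | ∃ (c : ℝ) (y : Θ → ℝ),
        (∀ t ∈ S, v t ≤ c + ∑ θ, y θ * t θ) ∧ x = c + ∑ θ, y θ * p θ} := by
  set W := {x | ∃ π, IsInfoStructure S π ∧ skillDist S π = p ∧ x = ∫ t in S, v t ∂π}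
  set Y := {x | ∃ (c : ℝ) (y : Θ → ℝ),
    (∀ t ∈ S, v t ≤ c + ∑ θ, y θ * t θ) ∧ x = c + ∑ θ, y θ * p θ}
  have hWY : ∀ a ∈ W, ∀ b ∈ Y, a ≤ b := by
    rintro _ ⟨π, hπ, rfl, rfl⟩ _ ⟨c, y, hvy, rfl⟩
    exact hπ.setIntegral_le_affine hS hv hvy
  have hvp : v p ∈ W :=
    exists_isInfoStructure_of_mem_convexHull_graph (subset_convexHull ℝ _ ⟨p, hp, rfl⟩)
  have hY : Y.Nonempty := by
    obtain ⟨M, hM⟩ := (hS.image_of_continuousOn hv).bddAbove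
    exact ⟨_, M, 0, fun t ht => by simpa using hM ⟨t, ht, rfl⟩, rfl⟩
  have hW : BddAbove W := hY.mono fun b hb a ha => hWY a ha b hb
  refine le_antisymm (csSup_le ⟨_, hvp⟩ fun a ha => le_csInf hY (hWY a ha)) ?_
  refine le_iff_forall_pos_lt_add.2 fun ε hε => ?_
  have hr : (p, sSup W + ε) ∉ convexHull ℝ ((fun t => (t, v t)) '' S) := fun h => by
    obtain ⟨π, hπ, hπp, hπv⟩ := exists_isInfoStructure_of_mem_convexHull_graph h
    linarith [le_csSup hW ⟨π, hπ, hπp, hπv⟩]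
  obtain ⟨g, c, hvg, hgp⟩ :=
    exists_affine_majorant_lt hS hv hp (by linarith [le_csSup hW hvp]) hr
  classical
  have hg : ∀ t : Θ → ℝ, g t = ∑ θ, g (Pi.single θ 1) * t θ := fun t => by
    conv_lhs => rw [pi_eq_sum_univ' t]
    simp [mul_comm]
  refine (csInf_le ⟨_, fun b hb => hWY _ hvp b hb⟩
    ⟨c, fun θ => g (Pi.single θ 1), ?_, rfl⟩).trans_lt ?_
  · simpa only [← hg] using hvg
  · simpa only [← hg] using hgp

end Duality

variable {Θ : Type*} [Fintype Θ] [Nonempty Θ]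

theorem stmt12_general (𝒯 : Set (Θ → ℝ)) (h𝒯 : 𝒯 ⊆ stdSimplex ℝ Θ)
    (A : Set (Θ → ℝ)) (hAfin : A.Finite) (hAne : A.Nonempty)
    (p : Θ → ℝ) (hp : p ∈ closure (convexHull ℝ 𝒯)) :
    Wfn A (closure (convexHull ℝ 𝒯)) p =
      sInf {x | ∃ (c : ℝ) (y : Θ → ℝ),
        (∀ t ∈ closure (convexHull ℝ 𝒯), valueFn A t ≤ c + ∑ θ, y θ * t θ) ∧
        x = c + ∑ θ, y θ * p θ} := by
  have hT : IsCompact (closure (convexHull ℝ 𝒯)) :=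
    (isCompact_stdSimplex ℝ Θ).of_isClosed_subset isClosed_closure
      (closure_minimal (convexHull_min h𝒯 (convex_stdSimplex ℝ Θ)) (isClosed_stdSimplex ℝ Θ))
  exact sSup_setIntegral_eq_sInf_affine_majorant hT
    (continuous_valueFn hAfin hAne).continuousOn hp

theorem stmt12 (𝒯 : Set (Θ → ℝ)) (h𝒯 : 𝒯 ⊆ stdSimplex ℝ Θ) (h𝒯c : IsClosed 𝒯)
    (A : Set (Θ → ℝ)) (hAfin : A.Finite) (hAne : A.Nonempty)
    (p : Θ → ℝ) (hp : p ∈ closure (convexHull ℝ 𝒯)) :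
    Wfn A (closure (convexHull ℝ 𝒯)) p =
      sInf {x | ∃ (c : ℝ) (y : Θ → ℝ),
        (∀ t ∈ closure (convexHull ℝ 𝒯), valueFn A t ≤ c + ∑ θ, y θ * t θ) ∧
        x = c + ∑ θ, y θ * p θ} :=
  stmt12_general 𝒯 h𝒯 A hAfin hAne p hp
end
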